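/- arXiv:2604.12457 — 2 statements merged into one kernel-verified Lean document; each statement's English description precedes it below -/
import Mathlib

section
/- Let E be a subset of {1,...,m} and w a word that pseudo-mixes E (with respect to a family of nonnegative m×m matrices). Then there is a constant τ in (0,1) such that for all nonnegative vectors u, v with support exactly E, d_H(u M_w, v M_w) ≤ τ · d_H(u, v). -/
/-- l1 norm of a vector in ℝ^m. -/
noncomputable def l1 {m : ℕ} (v : Fin m → ℝ) : ℝ := ∑ i, |v i|

/-- Support of a vector: the set of indices where it is positive. -/
noncomputable def supp {m : ℕ} (v : Fin m → ℝ) : Finset (Fin m) :=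
  Finset.univ.filter fun i => 0 < v i

/-- Hilbert projective distance between two vectors with common nonempty support `E`. -/
noncomputable def dH {m : ℕ} (E : Finset (Fin m)) (hE : E.Nonempty) (u v : Fin m → ℝ) : ℝ :=
  Real.log (E.sup' hE fun i => u i / v i) + Real.log (E.sup' hE fun i => v i / u i)


/-- Product of matrices along a word. -/
noncomputable def Mprod {A : Type*} {m : ℕ} (M : A → Matrix (Fin m) (Fin m) ℝ)
    (w : List A) : Matrix (Fin m) (Fin m) ℝ := (w.map M).prod

/-- Action of a word on a subset of indices: `E · w = supp(v_E M_w)`. -/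
noncomputable def Eact {A : Type*} {m : ℕ} (M : A → Matrix (Fin m) (Fin m) ℝ)
    (E : Finset (Fin m)) (w : List A) : Finset (Fin m) :=
  supp (Matrix.vecMul (fun i => if i ∈ E then (1 : ℝ) else 0) (Mprod M w))

/-- `w` pseudo-mixes `E`: `E·w = E` and each singleton of `E` is sent to `E` or `∅`. -/
def PseudoMixes {A : Type*} {m : ℕ} (M : A → Matrix (Fin m) (Fin m) ℝ)
    (E : Finset (Fin m)) (w : List A) : Prop :=
  Eact M E w = E ∧ ∀ i ∈ E, Eact M {i} w = E ∨ Eact M {i} w = ∅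

/-!
Let `N = M_w`. Pseudo-mixing says that each row of `N` indexed by `E` is, on the columns of `E`,
either identically zero or strictly positive, and `E·w = E` forces at least one positive row.
Finitely many such rows give a `c > 0` with `c N i j' ≤ N i j` for all `i, j, j' ∈ E`.
For `j ∈ E` the ratio `(uN)_j / (vN)_j` is an average of the ratios `u_i / v_i` with weights
`v_i N_ij / (vN)_j`, and the weights of any two columns are comparable up to `c²`.
Dobrushin's argument then bounds `y = exp d_H(uN, vN)` by `c² + (1 - c²) x` and by `c⁻²`,
where `x = exp d_H(u, v)`, and these two bounds give `log y ≤ max (1/2) (1 - c⁶) · log x`.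
-/

open Finset Filter Topology Matrix

theorem log_le_max_mul_log {κ x y : ℝ} (hκ0 : 0 < κ) (hx : 1 ≤ x) (hy : 0 < y)
    (h₁ : y ≤ κ + (1 - κ) * x) (h₂ : y ≤ κ⁻¹) :
    Real.log y ≤ max (1 / 2) (1 - κ ^ 3) * Real.log x := by
  have hx0 : 0 < x := by linarith
  have hlogx : 0 ≤ Real.log x := Real.log_nonneg hx
  rcases le_or_gt (κ ^ 2 * x) 1 with hsmall | hlarge
  · set z := κ + (1 - κ) * x
    have hz : 0 < z := hy.trans_le h₁
    -- `log (x / z) ≥ 1 - z / x = κ (x - 1) / x`, which beats `κ³ (x - 1)` as long as `κ² x ≤ 1`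
    have hgap : κ ^ 3 * (x - 1) ≤ 1 - (x / z)⁻¹ := by
      rw [inv_div, le_sub_comm, div_le_iff₀ hx0]
      nlinarith [mul_nonneg (mul_nonneg hκ0.le (sub_nonneg.2 hx)) (sub_nonneg.2 hsmall)]
    have hlog : κ ^ 3 * Real.log x ≤ Real.log x - Real.log z := by
      rw [← Real.log_div hx0.ne' hz.ne']
      calc κ ^ 3 * Real.log x ≤ κ ^ 3 * (x - 1) := by
            gcongr; exact Real.log_le_sub_one_of_pos hx0
        _ ≤ 1 - (x / z)⁻¹ := hgap
        _ ≤ Real.log (x / z) := Real.one_sub_inv_le_log_of_pos (div_pos hx0 hz)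
    calc Real.log y ≤ Real.log z := Real.log_le_log hy h₁
      _ ≤ (1 - κ ^ 3) * Real.log x := by linarith
      _ ≤ max (1 / 2) (1 - κ ^ 3) * Real.log x := by gcongr; exact le_max_right _ _
  · have hlogy : Real.log y ≤ -Real.log κ := by
      rw [← Real.log_inv]; exact Real.log_le_log hy h₂
    have hlarge' : 0 < 2 * Real.log κ + Real.log x := by
      have := Real.log_pos hlarge
      rwa [Real.log_mul (by positivity) hx0.ne', Real.log_pow] at this
    calc Real.log y ≤ 1 / 2 * Real.log x := by linarith
      _ ≤ max (1 / 2) (1 - κ ^ 3) * Real.log x := by gcongr; exact le_max_left _ _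

theorem log_div_le_max_mul_log {κ S T a b : ℝ} (hκ0 : 0 < κ) (hκ1 : κ ≤ 1) (hS0 : 0 < S)
    (hT0 : 0 < T) (hST : 1 ≤ S * T) (ha : 0 < a) (hb : T⁻¹ ≤ b)
    (h₁ : a ≤ κ * b + (1 - κ) * S) (h₂ : κ * a ≤ b) :
    Real.log (a / b) ≤ max (1 / 2) (1 - κ ^ 3) * Real.log (S * T) := by
  have hb0 : 0 < b := (inv_pos.2 hT0).trans_le hb
  refine log_le_max_mul_log hκ0 hST (div_pos ha hb0) ?_ ?_
  · have hTb : 1 ≤ T * b := by rwa [inv_le_iff_one_le_mul₀' hT0] at hb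
    have : (1 - κ) * S ≤ (1 - κ) * S * (T * b) :=
      le_mul_of_one_le_right (mul_nonneg (by linarith) hS0.le) hTb
    rw [div_le_iff₀ hb0]
    linarith
  · rwa [div_le_iff₀ hb0, ← div_eq_inv_mul, le_div_iff₀' hκ0]

theorem mem_supp {m : ℕ} {v : Fin m → ℝ} {i : Fin m} : i ∈ supp v ↔ 0 < v i := by
  simp [supp]

section SupportedVectors

variable {m : ℕ} {E : Finset (Fin m)} {u v : Fin m → ℝ}

theorem eq_zero_of_notMem_supp (hu : 0 ≤ u) (hsu : supp u = E) {i : Fin m} (hi : i ∉ E) :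
    u i = 0 :=
  le_antisymm (by simpa [← hsu, mem_supp] using hi) (hu i)

theorem le_sup'_div_mul (hE : E.Nonempty) (hu : 0 ≤ u) (hv : 0 ≤ v) (hsu : supp u = E)
    (hsv : supp v = E) (i : Fin m) : u i ≤ E.sup' hE (fun k => u k / v k) * v i := by
  by_cases hi : i ∈ E
  · rw [← div_le_iff₀ (mem_supp.1 (hsv ▸ hi))]
    exact le_sup' (fun k => u k / v k) hi
  · simp [eq_zero_of_notMem_supp hu hsu hi, eq_zero_of_notMem_supp hv hsv hi]

theorem sup'_div_pos (hE : E.Nonempty) (hsu : supp u = E) (hsv : supp v = E) :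
    0 < E.sup' hE fun i => u i / v i := by
  obtain ⟨i, hi⟩ := id hE
  exact (lt_sup'_iff _).2 ⟨i, hi, div_pos (mem_supp.1 (hsu ▸ hi)) (mem_supp.1 (hsv ▸ hi))⟩

theorem one_le_sup'_div_mul_sup'_div (hE : E.Nonempty) (hu : 0 ≤ u) (hv : 0 ≤ v)
    (hsu : supp u = E) (hsv : supp v = E) :
    1 ≤ (E.sup' hE fun i => u i / v i) * E.sup' hE fun i => v i / u i := by
  obtain ⟨i, hi⟩ := id hE
  have hui : 0 < u i := mem_supp.1 (hsu ▸ hi)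
  refine le_of_mul_le_mul_right ?_ hui
  nlinarith [le_sup'_div_mul hE hu hv hsu hsv i, le_sup'_div_mul hE hv hu hsv hsu i,
    sup'_div_pos hE hsu hsv]

variable {N : Matrix (Fin m) (Fin m) ℝ} {c : ℝ}

theorem vecMul_apply_pos (hN : ∀ i j, 0 ≤ N i j) (hu : 0 ≤ u) (hsu : supp u = E)
    {i₀ : Fin m} (hi₀ : i₀ ∈ E) (hrow : ∀ j ∈ E, 0 < N i₀ j) {j : Fin m} (hj : j ∈ E) :
    0 < (u ᵥ* N) j :=
  sum_pos' (fun i _ => mul_nonneg (hu i) (hN i j))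
    ⟨i₀, mem_univ _, mul_pos (mem_supp.1 (hsu ▸ hi₀)) (hrow j hj)⟩

theorem mul_vecMul_apply_le (hu : 0 ≤ u) (hsu : supp u = E)
    (hbal : ∀ i ∈ E, ∀ j ∈ E, ∀ j' ∈ E, c * N i j' ≤ N i j)
    {j j' : Fin m} (hj : j ∈ E) (hj' : j' ∈ E) : c * (u ᵥ* N) j' ≤ (u ᵥ* N) j := by
  simp only [Matrix.vecMul, dotProduct, mul_sum]
  refine sum_le_sum fun i _ => ?_
  by_cases hi : i ∈ E
  · rw [mul_left_comm]
    exact mul_le_mul_of_nonneg_left (hbal i hi j hj j' hj') (hu i)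
  · simp [eq_zero_of_notMem_supp hu hsu hi]

theorem vecMul_apply_le_mul (hN : ∀ i j, 0 ≤ N i j) {S : ℝ} (hS : ∀ i, u i ≤ S * v i)
    (j : Fin m) : (u ᵥ* N) j ≤ S * (v ᵥ* N) j := by
  simp only [Matrix.vecMul, dotProduct, mul_sum, ← mul_assoc]
  exact sum_le_sum fun i _ => mul_le_mul_of_nonneg_right (hS i) (hN i j)

theorem vecMul_div_vecMul_le (hN : ∀ i j, 0 ≤ N i j) (hu : 0 ≤ u) (hv : 0 ≤ v) (hsu : supp u = E)
    (hsv : supp v = E) (hc : 0 ≤ c) (hbal : ∀ i ∈ E, ∀ j ∈ E, ∀ j' ∈ E, c * N i j' ≤ N i j)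
    {S : ℝ} (hS : ∀ i, u i ≤ S * v i) {j₁ j₂ : Fin m} (hj₁ : j₁ ∈ E) (hj₂ : j₂ ∈ E)
    (hG₁ : 0 < (v ᵥ* N) j₁) (hG₂ : 0 < (v ᵥ* N) j₂) :
    (u ᵥ* N) j₁ / (v ᵥ* N) j₁ ≤ c ^ 2 * ((u ᵥ* N) j₂ / (v ᵥ* N) j₂) + (1 - c ^ 2) * S := by
  set d : Fin m → ℝ := fun i => N i j₁ / (v ᵥ* N) j₁ - c ^ 2 * N i j₂ / (v ᵥ* N) j₂
  have hGbal : c * (v ᵥ* N) j₁ ≤ (v ᵥ* N) j₂ := mul_vecMul_apply_le hv hsv hbal hj₂ hj₁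
  have hd : ∀ i ∈ E, 0 ≤ d i := fun i hi => by
    rw [sub_nonneg, div_le_div_iff₀ hG₂ hG₁]
    nlinarith [mul_le_mul (hbal i hi j₁ hj₁ j₂ hj₂) hGbal (by positivity) (hN i j₁)]
  have hsplit : ∀ x : Fin m → ℝ,
      (x ᵥ* N) j₁ / (v ᵥ* N) j₁ - c ^ 2 * ((x ᵥ* N) j₂ / (v ᵥ* N) j₂) = ∑ i, x i * d i := by
    intro x
    simp only [d, Matrix.vecMul, dotProduct, sum_div, mul_sum, ← sum_sub_distrib]
    exact sum_congr rfl fun i _ => by ring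
  have hweights : ∑ i, v i * d i = 1 - c ^ 2 := by
    rw [← hsplit, div_self hG₁.ne', div_self hG₂.ne', mul_one]
  have hmain : ∑ i, u i * d i ≤ S * ∑ i, v i * d i := by
    rw [mul_sum]
    refine sum_le_sum fun i _ => ?_
    by_cases hi : i ∈ E
    · rw [← mul_assoc]; exact mul_le_mul_of_nonneg_right (hS i) (hd i hi)
    · simp [eq_zero_of_notMem_supp hu hsu hi, eq_zero_of_notMem_supp hv hsv hi]
  rw [hweights] at hmain
  linarith [hsplit u]

theorem dH_vecMul_le (hN : ∀ i j, 0 ≤ N i j) (hE : E.Nonempty) (hc : 0 < c)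
    (hbal : ∀ i ∈ E, ∀ j ∈ E, ∀ j' ∈ E, c * N i j' ≤ N i j)
    {i₀ : Fin m} (hi₀ : i₀ ∈ E) (hrow : ∀ j ∈ E, 0 < N i₀ j)
    (hu : 0 ≤ u) (hv : 0 ≤ v) (hsu : supp u = E) (hsv : supp v = E) :
    dH E hE (u ᵥ* N) (v ᵥ* N) ≤ max (1 / 2) (1 - c ^ 6) * dH E hE u v := by
  set S := E.sup' hE fun i => u i / v i
  set T := E.sup' hE fun i => v i / u i
  have hS : ∀ i, u i ≤ S * v i := le_sup'_div_mul hE hu hv hsu hsv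
  have hT : ∀ i, v i ≤ T * u i := le_sup'_div_mul hE hv hu hsv hsu
  have hS0 : 0 < S := sup'_div_pos hE hsu hsv
  have hT0 : 0 < T := sup'_div_pos hE hsv hsu
  have hc1 : c ≤ 1 := le_of_mul_le_mul_right (by simpa using hbal i₀ hi₀ i₀ hi₀ i₀ hi₀)
    (hrow i₀ hi₀)
  set F := u ᵥ* N
  set G := v ᵥ* N
  have hF : ∀ j ∈ E, 0 < F j := fun j => vecMul_apply_pos hN hu hsu hi₀ hrow
  have hG : ∀ j ∈ E, 0 < G j := fun j => vecMul_apply_pos hN hv hsv hi₀ hrow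
  obtain ⟨j₁, hj₁, hsup₁⟩ := exists_mem_eq_sup' hE fun j => F j / G j
  obtain ⟨j₂, hj₂, hsup₂⟩ := exists_mem_eq_sup' hE fun j => G j / F j
  have hR₁ : 0 < F j₁ / G j₁ := div_pos (hF j₁ hj₁) (hG j₁ hj₁)
  have hR₂ : 0 < F j₂ / G j₂ := div_pos (hF j₂ hj₂) (hG j₂ hj₂)
  have hdH : dH E hE F G = Real.log ((F j₁ / G j₁) / (F j₂ / G j₂)) := by
    rw [dH, hsup₁, hsup₂, ← inv_div (F j₂), Real.log_inv, Real.log_div hR₁.ne' hR₂.ne',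
      sub_eq_add_neg]
  have hdH' : dH E hE u v = Real.log (S * T) := (Real.log_mul hS0.ne' hT0.ne').symm
  have hT₂ : T⁻¹ ≤ F j₂ / G j₂ := by
    rw [le_div_iff₀ (hG j₂ hj₂), inv_mul_le_iff₀ hT0]
    exact vecMul_apply_le_mul hN hT j₂
  have hκ : c ^ 2 * (F j₁ / G j₁) ≤ F j₂ / G j₂ := by
    rw [← mul_div_assoc, div_le_div_iff₀ (hG j₁ hj₁) (hG j₂ hj₂)]
    nlinarith [mul_le_mul (mul_vecMul_apply_le hu hsu hbal hj₂ hj₁)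
      (mul_vecMul_apply_le hv hsv hbal hj₁ hj₂) (mul_pos hc (hG j₂ hj₂)).le (hF j₂ hj₂).le]
  rw [hdH, hdH', show c ^ 6 = (c ^ 2) ^ 3 by ring]
  exact log_div_le_max_mul_log (pow_pos hc 2) (pow_le_one₀ hc.le hc1) hS0 hT0
    (one_le_sup'_div_mul_sup'_div hE hu hv hsu hsv) hR₁ hT₂
    (vecMul_div_vecMul_le hN hu hv hsu hsv hc.le hbal hS hj₁ hj₂ (hG j₁ hj₁) (hG j₂ hj₂)) hκ

end SupportedVectors

theorem exists_pos_mul_le_of_pos_or_zero {ι ι' : Type*} (N : Matrix ι ι' ℝ) (I : Finset ι)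
    (J : Finset ι') (hrow : ∀ i ∈ I, (∀ j ∈ J, 0 < N i j) ∨ ∀ j ∈ J, N i j = 0) :
    ∃ c > 0, ∀ i ∈ I, ∀ j ∈ J, ∀ j' ∈ J, c * N i j' ≤ N i j := by
  have hsmall : ∀ᶠ c in 𝓝[>] (0 : ℝ), ∀ i ∈ I, ∀ j ∈ J, ∀ j' ∈ J, c * N i j' ≤ N i j := by
    simp only [eventually_all_finset]
    intro i hi j hj j' hj'
    rcases hrow i hi with hpos | hzero
    · have hlim : Tendsto (fun c : ℝ => c * N i j') (𝓝[>] 0) (𝓝 0) :=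
        ((continuous_mul_const _).tendsto' 0 0 (zero_mul _)).mono_left nhdsWithin_le_nhds
      exact (hlim.eventually (gt_mem_nhds (hpos j hj))).mono fun c hc => hc.le
    · exact .of_forall fun c => by simp [hzero j hj, hzero j' hj']
  obtain ⟨c, hc, hc0⟩ := (hsmall.and self_mem_nhdsWithin).exists
  exact ⟨c, hc0, hc⟩

section PseudoMixing

variable {A : Type*} {m : ℕ} {M : A → Matrix (Fin m) (Fin m) ℝ}

theorem Mprod_nonneg (hM : ∀ a i j, 0 ≤ M a i j) (w : List A) (i j : Fin m) :
    0 ≤ Mprod M w i j :=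
  List.prod_induction (fun N : Matrix (Fin m) (Fin m) ℝ => ∀ i j, 0 ≤ N i j)
    (fun _ _ hN hN' i j => by
      rw [Matrix.mul_apply]; exact sum_nonneg fun k _ => mul_nonneg (hN i k) (hN' k j))
    (fun i j => by by_cases h : i = j <;> simp [Matrix.one_apply, h])
    (by simpa using fun a _ => hM a) i j

theorem Eact_eq_supp (E : Finset (Fin m)) (w : List A) :
    Eact M E w = supp fun j => ∑ i ∈ E, Mprod M w i j := by
  classical
  unfold Eact
  congr 1
  ext j
  simp [Matrix.vecMul, dotProduct, ite_mul, sum_ite_mem]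

theorem PseudoMixes.row_pos_or_zero {E : Finset (Fin m)} {w : List A} (hM : ∀ a i j, 0 ≤ M a i j) (hw : PseudoMixes M E w) :
    ∀ i ∈ E, (∀ j ∈ E, 0 < Mprod M w i j) ∨ ∀ j ∈ E, Mprod M w i j = 0 := by
  intro i hi
  rcases hw.2 i hi with h | h <;> simp only [Eact_eq_supp, sum_singleton] at h
  · exact .inl fun j hj => mem_supp.1 (h ▸ hj)
  · refine .inr fun j _ => le_antisymm (not_lt.1 fun hpos => ?_) (Mprod_nonneg hM w i j)
    have hj : j ∈ supp fun j => Mprod M w i j := mem_supp.2 hpos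
    simp [h] at hj

theorem PseudoMixes.exists_pos_row {E : Finset (Fin m)} {w : List A} (hM : ∀ a i j, 0 ≤ M a i j) (hw : PseudoMixes M E w)
    (hE : E.Nonempty) : ∃ i ∈ E, ∀ j ∈ E, 0 < Mprod M w i j := by
  obtain ⟨j₀, hj₀⟩ := hE
  have hcol : 0 < ∑ i ∈ E, Mprod M w i j₀ := by
    have hEw := hw.1
    rw [Eact_eq_supp] at hEw
    exact mem_supp.1 (hEw ▸ hj₀)
  obtain ⟨i, hi, hpos⟩ := exists_lt_of_sum_lt (f := fun _ => (0 : ℝ)) (by simpa using hcol)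
  refine ⟨i, hi, ?_⟩
  rcases hw.row_pos_or_zero hM i hi with hrow | hrow
  · exact hrow
  · exact absurd (hrow j₀ hj₀) hpos.ne'

end PseudoMixing

/-- Birkhoff-type contraction for pseudo-mixing words. -/
theorem stmt7 {A : Type*} {m : ℕ}
    (M : A → Matrix (Fin m) (Fin m) ℝ) (hM : ∀ a i j, 0 ≤ M a i j)
    (E : Finset (Fin m)) (hE : E.Nonempty) (w : List A) (hw : PseudoMixes M E w) :
    ∃ τ : ℝ, 0 < τ ∧ τ < 1 ∧
      ∀ u v : Fin m → ℝ, 0 ≤ u → 0 ≤ v → supp u = E → supp v = E →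
        dH E hE (Matrix.vecMul u (Mprod M w)) (Matrix.vecMul v (Mprod M w)) ≤
          τ * dH E hE u v := by
  obtain ⟨i₀, hi₀, hrow⟩ := hw.exists_pos_row hM hE
  obtain ⟨c, hc, hbal⟩ :=
    exists_pos_mul_le_of_pos_or_zero (Mprod M w) E E (hw.row_pos_or_zero hM)
  exact ⟨max (1 / 2) (1 - c ^ 6), by positivity, max_lt (by norm_num) (by linarith [pow_pos hc 6]),
    fun u v hu hv hsu hsv => dH_vecMul_le (Mprod_nonneg hM w) hE hc hbal hi₀ hrow hu hv hsu hsv⟩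
end

section
/- With Live defined as the capital not stored in the non-betting cone S, for every nonnegative vector v and every letter a, the absolute difference | ||v M_a|| - ||v|| | is at most |A| · Live(v). -/
/-- The cone of "non-betting" vectors: nonnegative vectors whose l1-norm is preserved
by multiplication by every word `M_z`. -/
def Scone {A : Type*} {m : ℕ} (M : A → Matrix (Fin m) (Fin m) ℝ) : Set (Fin m → ℝ) :=
  {s | 0 ≤ s ∧ ∀ z : List A, l1 (Matrix.vecMul s (Mprod M z)) = l1 s}

/-- The "live" part of the capital of a nonnegative vector: the l1-norm minus the
largest norm of a non-betting vector dominated by `v`. -/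
noncomputable def Live {A : Type*} {m : ℕ} (M : A → Matrix (Fin m) (Fin m) ℝ)
    (v : Fin m → ℝ) : ℝ :=
  l1 v - sSup (l1 '' {s | s ∈ Scone M ∧ s ≤ v})

lemma l1_nonneg' {m : ℕ} (v : Fin m → ℝ) : 0 ≤ l1 v :=
  Finset.sum_nonneg fun i _ => abs_nonneg _

lemma l1_eq_sum' {m : ℕ} {v : Fin m → ℝ} (hv : 0 ≤ v) : l1 v = ∑ i, v i :=
  Finset.sum_congr rfl fun i _ => abs_of_nonneg (hv i)

lemma l1_add' {m : ℕ} {x y : Fin m → ℝ} (hx : 0 ≤ x) (hy : 0 ≤ y) :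
    l1 (x + y) = l1 x + l1 y := by
  rw [l1_eq_sum' (add_nonneg hx hy), l1_eq_sum' hx, l1_eq_sum' hy, ← Finset.sum_add_distrib]
  rfl

lemma vecMul_nonneg' {m : ℕ} {u : Fin m → ℝ} {N : Matrix (Fin m) (Fin m) ℝ}
    (hu : 0 ≤ u) (hN : ∀ i j, 0 ≤ N i j) : 0 ≤ Matrix.vecMul u N := by
  intro j
  simp only [Matrix.vecMul, dotProduct, Pi.zero_apply]
  exact Finset.sum_nonneg fun i _ => mul_nonneg (hu i) (hN i j)

/-- One step of the process changes the norm by at most `|A|` times the live capital. -/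
theorem stmt11 {A : Type*} [Fintype A] [Nonempty A] {m : ℕ}
    (M : A → Matrix (Fin m) (Fin m) ℝ) (hM : ∀ a i j, 0 ≤ M a i j)
    (hsf : ∀ u : Fin m → ℝ, 0 ≤ u →
      ∑ a, l1 (Matrix.vecMul u (M a)) ≤ (Fintype.card A : ℝ) * l1 u)
    (v : Fin m → ℝ) (hv : 0 ≤ v) (a : A) :
    |l1 (Matrix.vecMul v (M a)) - l1 v| ≤ (Fintype.card A : ℝ) * Live M v := by
  set c : ℝ := (Fintype.card A : ℝ) with hc
  have hcard : 0 < Fintype.card A := Fintype.card_pos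
  have hcpos : (0:ℝ) < c := by rw [hc]; exact_mod_cast hcard
  have hc1 : (1:ℝ) ≤ c := by rw [hc]; exact_mod_cast hcard
  set D : ℝ := |l1 (Matrix.vecMul v (M a)) - l1 v| with hD
  -- key bound for every member of the image set
  have key : ∀ x ∈ l1 '' {s | s ∈ Scone M ∧ s ≤ v}, x ≤ l1 v - D / c := by
    rintro x ⟨s, ⟨⟨hs0, hsS⟩, hsv⟩, rfl⟩
    set u : Fin m → ℝ := v - s with husub
    have hu0 : 0 ≤ u := fun i => by simp only [husub, Pi.sub_apply, Pi.zero_apply]; linarith [hsv i]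
    have hvsu : v = s + u := by simp [husub]
    have hl1v : l1 v = l1 s + l1 u := by rw [hvsu, l1_add' hs0 hu0]
    have hMa : Mprod M [a] = M a := by simp [Mprod]
    have hsMa : l1 (Matrix.vecMul s (M a)) = l1 s := by
      have := hsS [a]; rwa [hMa] at this
    have hsplit : l1 (Matrix.vecMul v (M a)) = l1 s + l1 (Matrix.vecMul u (M a)) := by
      rw [hvsu, Matrix.add_vecMul,
        l1_add' (vecMul_nonneg' hs0 (hM a)) (vecMul_nonneg' hu0 (hM a)), hsMa]
    have hdiff : l1 (Matrix.vecMul v (M a)) - l1 v = l1 (Matrix.vecMul u (M a)) - l1 u := by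
      rw [hsplit, hl1v]; ring
    have hup : l1 (Matrix.vecMul u (M a)) ≤ c * l1 u := by
      refine le_trans ?_ (hsf u hu0)
      exact Finset.single_le_sum (f := fun b => l1 (Matrix.vecMul u (M b)))
        (fun b _ => l1_nonneg' _) (Finset.mem_univ a)
    have hDle : D ≤ c * l1 u := by
      rw [hD, hdiff, abs_le]
      constructor
      · have : -(c * l1 u) ≤ -l1 u := by
          have := mul_le_mul_of_nonneg_right hc1 (l1_nonneg' u)
          linarith
        have h2 : (0:ℝ) ≤ l1 (Matrix.vecMul u (M a)) := l1_nonneg' _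
        linarith
      · have := l1_nonneg' u
        linarith
    have : D / c ≤ l1 u := (div_le_iff₀ hcpos).mpr (by linarith [hDle, mul_comm c (l1 u)])
    linarith [hl1v]
  have hzero : (0:ℝ) ∈ l1 '' {s | s ∈ Scone M ∧ s ≤ v} := by
    refine ⟨0, ⟨⟨le_refl _, fun z => by simp⟩, hv⟩, by simp [l1]⟩
  have hrhs0 : (0:ℝ) ≤ l1 v - D / c := key 0 hzero
  have hsup : sSup (l1 '' {s | s ∈ Scone M ∧ s ≤ v}) ≤ l1 v - D / c :=
    Real.sSup_le key hrhs0
  have : D / c ≤ Live M v := by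
    unfold Live; linarith
  calc D = c * (D / c) := by field_simp
    _ ≤ c * Live M v := by
        exact mul_le_mul_of_nonneg_left this (le_of_lt hcpos)
end
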